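/- arXiv:2403.06761 — 2 statements merged into one kernel-verified Lean document; each statement's English description precedes it below -/
import Mathlib

section
/- Let θ₊, θ₋ ∈ ℝ with θ₋ ≠ 0 and |θ₊| ≥ |θ₋|, and let p₊, p₋ ∈ ℂ × ℂ with ‖p₊‖² + ‖p₋‖² = 1 and p₋ ≠ 0. Set c := √(θ₊²‖p₊‖² + θ₋²‖p₋‖²) and define γ(t) := e^{iθ₊t}·p₊ + e^{iθ₋t}·p₋. If γ is nonconstant and satisfies γ(t + T) = γ(t) for all t ∈ ℝ for some T > 0, then T ≥ 2π/c. -/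
open Complex

/-- The Euclidean norm on `ℂ × ℂ`: `‖x‖ = √(|x₁|² + |x₂|²)`. -/
noncomputable def hNorm (x : ℂ × ℂ) : ℝ :=
  Real.sqrt (Complex.normSq x.1 + Complex.normSq x.2)

open Real

/-! Periodicity of `e^{iat}·u + e^{ibt}·v` with period `T` says
`e^{iat}·(e^{iaT} - 1)·u = e^{ibt}·(1 - e^{ibT})·v` for all `t`. For `a ≠ b` the two exponentials
are linearly independent, so `e^{ibT} = 1` because `v ≠ 0`; for `a = b` the curve is
`e^{iat}·(u + v)` with `u + v ≠ 0` since it is nonconstant. Hence `bT ∈ 2πℤ \ {0}`, and as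
`c ≥ |b|` on the unit sphere, `T ≥ 2π/|b| ≥ 2π/c`. -/

section ExpCurve

variable {E : Type*} [AddCommGroup E] [Module ℂ E]

noncomputable def expCurve (a b : ℝ) (u v : E) (t : ℝ) : E :=
  cexp (I * a * t) • u + cexp (I * b * t) • v

theorem expCurve_add (a b : ℝ) (u v : E) (t T : ℝ) :
    expCurve a b u v (t + T) = expCurve a b (cexp (I * a * T) • u) (cexp (I * b * T) • v) t := by
  simp only [expCurve, smul_smul, ← Complex.exp_add, Complex.ofReal_add]
  ring_nf

theorem expCurve_self (a : ℝ) (u v : E) (t : ℝ) :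
    expCurve a a u v t = cexp (I * a * t) • (u + v) :=
  (smul_add _ _ _).symm

theorem eq_zero_of_forall_cexp_smul_eq {a b : ℝ} (hab : a ≠ b) {u v : E}
    (h : ∀ t : ℝ, cexp (I * a * t) • u = cexp (I * b * t) • v) : u = 0 := by
  have huv : u = v := by simpa using h 0
  -- at `t = π / (a - b)` the two exponentials differ by the factor `e^{iπ} = -1`
  set t₀ : ℝ := π / (a - b)
  have hflip : cexp (I * a * t₀) = -cexp (I * b * t₀) := by
    have hsub : (a : ℂ) - b ≠ 0 := sub_ne_zero.mpr (by exact_mod_cast hab)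
    have harg : I * a * t₀ = I * b * t₀ + π * I := by
      simp only [t₀, Complex.ofReal_div, Complex.ofReal_sub]
      field_simp
      ring
    rw [harg, Complex.exp_add, Complex.exp_pi_mul_I, mul_neg_one]
  have h₀ := h t₀
  rw [hflip, neg_smul, ← huv, neg_eq_iff_add_eq_zero, ← two_smul ℂ, smul_smul] at h₀
  exact (smul_eq_zero.mp h₀).resolve_left (mul_ne_zero two_ne_zero (Complex.exp_ne_zero _))

theorem cexp_eq_one_of_periodic_expCurve {a b : ℝ} {u v : E} {T : ℝ}
    (hper : Function.Periodic (expCurve a b u v) T) (hv : v ≠ 0)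
    (hnonconst : ∃ s t : ℝ, expCurve a b u v s ≠ expCurve a b u v t) :
    cexp (I * b * T) = 1 := by
  by_cases hab : a = b
  · subst hab
    have hsum : u + v ≠ 0 := by
      rintro hsum
      obtain ⟨s, t, hst⟩ := hnonconst
      simp only [expCurve_self, hsum, smul_zero] at hst
      exact hst rfl
    have h₀ := hper 0
    rw [expCurve_self, expCurve_self, zero_add, ← sub_eq_zero, Complex.ofReal_zero, mul_zero,
      Complex.exp_zero, ← sub_smul] at h₀
    exact sub_eq_zero.mp ((smul_eq_zero.mp h₀).resolve_right hsum)
  · have hcoeff : ∀ t : ℝ, cexp (I * b * t) • ((1 - cexp (I * b * T)) • v)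
        = cexp (I * a * t) • ((cexp (I * a * T) - 1) • u) := by
      intro t
      have ht := hper t
      rw [expCurve_add] at ht
      simp only [expCurve, smul_smul, sub_smul, one_smul, smul_sub] at ht ⊢
      rw [sub_eq_sub_iff_add_eq_add, add_comm, ht, add_comm]
    have hzero := eq_zero_of_forall_cexp_smul_eq (Ne.symm hab) hcoeff
    exact (sub_eq_zero.mp ((smul_eq_zero.mp hzero).resolve_right hv)).symm

end ExpCurve

theorem two_pi_le_abs_mul_of_cexp_eq_one {θ T : ℝ} (hθ : θ ≠ 0) (hT : 0 < T)
    (h : cexp (I * θ * T) = 1) : 2 * π ≤ |θ| * T := by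
  obtain ⟨n, hn⟩ := Complex.exp_eq_one_iff.mp h
  have hreal : θ * T = n * (2 * π) := by
    have : I * (θ * T : ℝ) = I * (n * (2 * π) : ℝ) := by push_cast; linear_combination hn
    exact_mod_cast mul_left_cancel₀ I_ne_zero this
  have hn : n ≠ 0 := by
    rintro rfl
    simp only [Int.cast_zero, zero_mul, mul_eq_zero] at hreal
    exact hreal.elim hθ hT.ne'
  have hn_abs : (1 : ℝ) ≤ |(n : ℝ)| := by exact_mod_cast Int.one_le_abs hn
  calc 2 * π ≤ |(n : ℝ)| * (2 * π) := le_mul_of_one_le_left (by positivity) hn_abs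
    _ = |θ| * T := by rw [← abs_of_pos hT, ← abs_mul, hreal, abs_mul, abs_of_pos Real.two_pi_pos]

theorem stmt_2 (θp θm : ℝ) (hθm : θm ≠ 0) (hθ : |θm| ≤ |θp|)
    (pp pm : ℂ × ℂ) (hnorm : hNorm pp ^ 2 + hNorm pm ^ 2 = 1) (hpm : pm ≠ 0)
    (c : ℝ) (hc : c = Real.sqrt (θp ^ 2 * hNorm pp ^ 2 + θm ^ 2 * hNorm pm ^ 2))
    (γ : ℝ → ℂ × ℂ)
    (hγ : ∀ t : ℝ, γ t = Complex.exp (Complex.I * θp * t) • pp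
        + Complex.exp (Complex.I * θm * t) • pm)
    (hnonconst : ∃ s t : ℝ, γ s ≠ γ t)
    (T : ℝ) (hT : 0 < T) (hper : ∀ t : ℝ, γ (t + T) = γ t) :
    T ≥ 2 * Real.pi / c := by
  obtain rfl : γ = expCurve θp θm pp pm := funext hγ
  have hperiod : 2 * π ≤ |θm| * T :=
    two_pi_le_abs_mul_of_cexp_eq_one hθm hT (cexp_eq_one_of_periodic_expCurve hper hpm hnonconst)
  have hθm_le_c : |θm| ≤ c := by
    have hsq : θm ^ 2 ≤ θp ^ 2 := sq_le_sq.mpr hθ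
    rw [hc, ← Real.sqrt_sq_eq_abs]
    refine Real.sqrt_le_sqrt ?_
    nlinarith [mul_le_mul_of_nonneg_right hsq (sq_nonneg (hNorm pp))]
  have hθm_pos : 0 < |θm| := abs_pos.mpr hθm
  calc 2 * π / c ≤ 2 * π / |θm| := div_le_div_of_nonneg_left (by positivity) hθm_pos hθm_le_c
    _ ≤ T := (div_le_iff₀' hθm_pos).mpr hperiod
end

section
/- Let ε > 0 and let γ : ℝ → ℂ × ℂ be a nonconstant twice-differentiable curve with ‖γ(t)‖ = 1 for all t. Set c := ‖γ'(0)‖ and δ := Im( conj(γ₁(0))·γ₁'(0) + conj(γ₂(0))·γ₂'(0) ), and suppose γ''(t) − ε·(i·γ'(t)) + (c² − ε·δ)·γ(t) = 0 for all t. If γ(t + T) = γ(t) for all t ∈ ℝ for some T > 0, then T ≥ 2π/c in the case c ≥ ε, and T ≥ 2π/ε in the case c ≤ ε. -/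
/-!
Factor the equation as `(d/dt - λ₁)(d/dt - λ₂) γ = 0` with `λ₁ + λ₂ = iε`. Then `γ' - λ₂ γ` and
`γ' - λ₁ γ` are `e^{λ₁ t}`, `e^{λ₂ t}` times constant vectors, and periodicity forces every exponent
that actually occurs to be `iω` with `ωT ∈ 2πℤ`. If only one exponent occurs, `γ(t) = e^{iωt} γ(0)`,
so `c = |ω| ≥ 2π/T`. Otherwise `γ(t) = e^{iω₁t} A + e^{iω₂t} B` with `ω₁ + ω₂ = ε` and `ω₁ ≠ ω₂`;
constancy of `‖γ‖` forces `A ⟂ B`, so `c² = ω₁²‖A‖² + ω₂²‖B‖²` is a proper convex combination of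
`ω₁²` and `ω₂²`. Either both frequencies are nonzero and `c ≥ min |ωᵢ| ≥ 2π/T`, or one vanishes,
the other is `ε ≥ 2π/T`, and `c < ε`.
-/

open Complex

open Real Function

theorem exists_add_eq_and_mul_eq {K : Type*} [Field K] [IsAlgClosed K] [NeZero (2 : K)]
    (s p : K) : ∃ x y : K, x + y = s ∧ x * y = p := by
  obtain ⟨d, hd⟩ := IsAlgClosed.exists_eq_mul_self (s ^ 2 - 4 * p)
  have h2 : (2 : K) ≠ 0 := two_ne_zero
  refine ⟨(s + d) / 2, (s - d) / 2, by field_simp; ring, ?_⟩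
  field_simp
  linear_combination hd

theorem Function.Periodic.deriv {F : Type*} [NormedAddCommGroup F] [NormedSpace ℝ F]
    {f : ℝ → F} {T : ℝ} (hf : Periodic f T) : Periodic (deriv f) T := fun t => by
  rw [← deriv_comp_add_const, hf.funext]

theorem exists_eq_ofReal_mul_I_of_cexp_mul_eq_one {l : ℂ} {T : ℝ} (hT : 0 < T)
    (h : cexp (l * T) = 1) : ∃ ω : ℝ, l = ω * I ∧ (ω = 0 ∨ 2 * π ≤ |ω| * T) := by
  obtain ⟨n, hn⟩ := exp_eq_one_iff.mp h
  refine ⟨2 * π * n / T, ?_, ?_⟩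
  · have hT0 : (T : ℂ) ≠ 0 := by exact_mod_cast hT.ne'
    push_cast
    field_simp
    linear_combination hn
  · rcases eq_or_ne n 0 with rfl | hn0
    · simp
    · right
      have h1 : (1 : ℝ) ≤ |(n : ℝ)| := by exact_mod_cast Int.one_le_abs hn0
      rw [abs_div, abs_mul, abs_of_pos hT, abs_of_pos two_pi_pos, div_mul_cancel₀ _ hT.ne']
      nlinarith [pi_pos]

theorem hasDerivAt_cexp_mul_ofReal (l : ℂ) (t : ℝ) :
    HasDerivAt (fun t : ℝ => cexp (l * t)) (l * cexp (l * t)) t := by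
  simpa [mul_comm] using ((hasDerivAt_id (t : ℂ)).const_mul l).cexp.comp_ofReal

section LinearODE

variable {E : Type*} [NormedAddCommGroup E] [NormedSpace ℂ E]

theorem eq_cexp_mul_smul_of_hasDerivAt {u : ℝ → E} {l : ℂ}
    (hu : ∀ t, HasDerivAt u (l • u t) t) (t : ℝ) : u t = cexp (l * t) • u 0 := by
  have hd : ∀ s, HasDerivAt (fun s : ℝ => cexp (-l * s) • u s) 0 s := fun s => by
    refine ((hasDerivAt_cexp_mul_ofReal (-l) s).smul (hu s)).congr_deriv ?_
    rw [smul_smul, ← add_smul]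
    ring_nf
    simp
  have hconst := is_const_of_deriv_eq_zero (fun s => (hd s).differentiableAt)
    (fun s => (hd s).deriv) t 0
  simp only [ofReal_zero, mul_zero, Complex.exp_zero, one_smul] at hconst
  rw [← hconst, smul_smul, ← Complex.exp_add]
  simp

theorem cexp_mul_eq_one_of_hasDerivAt {u : ℝ → E} {l : ℂ} {T : ℝ}
    (hu : ∀ t, HasDerivAt u (l • u t) t) (hT : u T = u 0) (h0 : u 0 ≠ 0) :
    cexp (l * T) = 1 := by
  have h : (cexp (l * T) - 1) • u 0 = 0 := by
    rw [sub_smul, one_smul, ← eq_cexp_mul_smul_of_hasDerivAt hu, hT, sub_self]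
  exact sub_eq_zero.mp ((smul_eq_zero.mp h).resolve_right h0)

theorem two_pi_le_norm_mul_of_deriv_eq_smul {γ : ℝ → E} {l : ℂ} {T : ℝ} (hT : 0 < T)
    (hγ : Differentiable ℝ γ) (hl : ∀ t, deriv γ t = l • γ t) (hper : Periodic γ T)
    (hnonconst : ∃ s t, γ s ≠ γ t) : 2 * π ≤ ‖l‖ * T := by
  have hu : ∀ t, HasDerivAt γ (l • γ t) t := fun t => hl t ▸ (hγ t).hasDerivAt
  have hsol := eq_cexp_mul_smul_of_hasDerivAt hu
  obtain ⟨s, t, hst⟩ := hnonconst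
  have hγ0 : γ 0 ≠ 0 := fun h => hst (by rw [hsol s, hsol t, h, smul_zero, smul_zero])
  obtain ⟨ω, rfl, hω⟩ :=
    exists_eq_ofReal_mul_I_of_cexp_mul_eq_one hT (cexp_mul_eq_one_of_hasDerivAt hu hper.eq hγ0)
  rcases hω with rfl | hω
  · exact absurd (by rw [hsol s, hsol t]; simp) hst
  · rwa [norm_mul, norm_I, norm_real, Real.norm_eq_abs, mul_one]

variable {γ : ℝ → E} {l₁ l₂ : ℂ}

theorem hasDerivAt_deriv_sub_smul (hγ : Differentiable ℝ γ) (hγ' : Differentiable ℝ (deriv γ))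
    (hode : ∀ t, deriv (deriv γ) t = (l₁ + l₂) • deriv γ t - (l₁ * l₂) • γ t) (t : ℝ) :
    HasDerivAt (fun t => deriv γ t - l₂ • γ t) (l₁ • (deriv γ t - l₂ • γ t)) t := by
  refine ((hγ' t).hasDerivAt.sub ((hγ t).hasDerivAt.const_smul l₂)).congr_deriv ?_
  rw [hode t]
  module

theorem deriv_eq_smul_of_double_root {l : ℂ} (hγ : Differentiable ℝ γ)
    (hγ' : Differentiable ℝ (deriv γ))
    (hode : ∀ t, deriv (deriv γ) t = (l + l) • deriv γ t - (l * l) • γ t)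
    {T : ℝ} (hT : T ≠ 0) (hper : Periodic γ T) (t : ℝ) : deriv γ t = l • γ t := by
  set f := fun t => deriv γ t - l • γ t
  have hf : ∀ t, HasDerivAt f (l • f t) t := hasDerivAt_deriv_sub_smul hγ hγ' hode
  suffices hf0 : f 0 = 0 by
    have := eq_cexp_mul_smul_of_hasDerivAt hf t
    rwa [hf0, smul_zero, sub_eq_zero] at this
  by_contra hf0
  have hexp : cexp (-l * T) = 1 := by
    rw [neg_mul, Complex.exp_neg,
      cexp_mul_eq_one_of_hasDerivAt hf (by simp only [f, hper.eq, hper.deriv.eq]) hf0, inv_one]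
  -- `cexp (-l * s) • γ s` is `T`-periodic, yet its derivative is the constant `f 0`
  have hconst : ∀ s, HasDerivAt (fun s : ℝ => cexp (-l * s) • γ s - s • f 0) 0 s := fun s => by
    refine (((hasDerivAt_cexp_mul_ofReal (-l) s).smul (hγ s).hasDerivAt).sub
      ((hasDerivAt_id s).smul_const (f 0))).congr_deriv ?_
    have hf0s : f 0 = cexp (-l * s) • f s := by
      rw [eq_cexp_mul_smul_of_hasDerivAt hf s, smul_smul, ← Complex.exp_add]
      simp
    rw [hf0s]
    module
  have := is_const_of_deriv_eq_zero (fun s => (hconst s).differentiableAt)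
    (fun s => (hconst s).deriv) T 0
  simp only [hexp, hper.eq, one_smul, ofReal_zero, mul_zero, Complex.exp_zero, zero_smul,
    sub_zero, sub_eq_self, smul_eq_zero, hT, false_or] at this
  exact hf0 this

theorem eq_cexp_smul_add_cexp_smul (hγ : Differentiable ℝ γ) (hγ' : Differentiable ℝ (deriv γ))
    (hode : ∀ t, deriv (deriv γ) t = (l₁ + l₂) • deriv γ t - (l₁ * l₂) • γ t) (hne : l₁ ≠ l₂)
    (t : ℝ) :
    γ t = cexp (l₁ * t) • (l₁ - l₂)⁻¹ • (deriv γ 0 - l₂ • γ 0)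
      + cexp (l₂ * t) • (l₂ - l₁)⁻¹ • (deriv γ 0 - l₁ • γ 0) := by
  have hode' : ∀ t, deriv (deriv γ) t = (l₂ + l₁) • deriv γ t - (l₂ * l₁) • γ t := fun t => by
    rw [hode t, add_comm, mul_comm]
  have hf := eq_cexp_mul_smul_of_hasDerivAt (hasDerivAt_deriv_sub_smul hγ hγ' hode) t
  have hg := eq_cexp_mul_smul_of_hasDerivAt (hasDerivAt_deriv_sub_smul hγ hγ' hode') t
  have hsub : l₁ - l₂ ≠ 0 := sub_ne_zero.mpr hne
  rw [smul_comm _ (l₁ - l₂)⁻¹, smul_comm _ (l₂ - l₁)⁻¹, ← hf, ← hg, ← neg_sub l₁, inv_neg]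
  calc γ t = (l₁ - l₂)⁻¹ • (l₁ - l₂) • γ t := (inv_smul_smul₀ hsub _).symm
    _ = _ := by rw [neg_smul, ← sub_eq_add_neg, ← smul_sub]; congr 1; module

theorem deriv_eq_smul_or_eq_cexp_smul_add_cexp_smul (hγ : Differentiable ℝ γ)
    (hγ' : Differentiable ℝ (deriv γ))
    (hode : ∀ t, deriv (deriv γ) t = (l₁ + l₂) • deriv γ t - (l₁ * l₂) • γ t)
    {T : ℝ} (hT : T ≠ 0) (hper : Periodic γ T) :
    (∃ l : ℂ, ∀ t, deriv γ t = l • γ t) ∨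
      l₁ ≠ l₂ ∧ cexp (l₁ * T) = 1 ∧ cexp (l₂ * T) = 1 ∧ ∃ A B : E, A ≠ 0 ∧ B ≠ 0 ∧
        (∀ t : ℝ, γ t = cexp (l₁ * t) • A + cexp (l₂ * t) • B) ∧
        deriv γ 0 = l₁ • A + l₂ • B := by
  have hode' : ∀ t, deriv (deriv γ) t = (l₂ + l₁) • deriv γ t - (l₂ * l₁) • γ t := fun t => by
    rw [hode t, add_comm, mul_comm]
  set f := fun t => deriv γ t - l₂ • γ t
  set g := fun t => deriv γ t - l₁ • γ t
  have hf : ∀ t, HasDerivAt f (l₁ • f t) t := hasDerivAt_deriv_sub_smul hγ hγ' hode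
  have hg : ∀ t, HasDerivAt g (l₂ • g t) t := hasDerivAt_deriv_sub_smul hγ hγ' hode'
  by_cases hf0 : f 0 = 0
  · refine Or.inl ⟨l₂, fun t => sub_eq_zero.mp ?_⟩
    rw [← smul_zero (cexp (l₁ * t)), ← hf0]
    exact eq_cexp_mul_smul_of_hasDerivAt hf t
  by_cases hg0 : g 0 = 0
  · refine Or.inl ⟨l₁, fun t => sub_eq_zero.mp ?_⟩
    rw [← smul_zero (cexp (l₂ * t)), ← hg0]
    exact eq_cexp_mul_smul_of_hasDerivAt hg t
  have hne : l₁ ≠ l₂ := by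
    rintro rfl
    exact hf0 (sub_eq_zero.mpr (deriv_eq_smul_of_double_root hγ hγ' hode hT hper 0))
  have hfT : f T = f 0 := by simp only [f, hper.eq, hper.deriv.eq]
  have hgT : g T = g 0 := by simp only [g, hper.eq, hper.deriv.eq]
  refine Or.inr ⟨hne, cexp_mul_eq_one_of_hasDerivAt hf hfT hf0,
    cexp_mul_eq_one_of_hasDerivAt hg hgT hg0, _, _,
    smul_ne_zero (inv_ne_zero (sub_ne_zero.mpr hne)) hf0,
    smul_ne_zero (inv_ne_zero (sub_ne_zero.mpr hne.symm)) hg0,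
    eq_cexp_smul_add_cexp_smul hγ hγ' hode hne, ?_⟩
  have hsub : l₁ - l₂ ≠ 0 := sub_ne_zero.mpr hne
  rw [← neg_sub l₁, inv_neg]
  match_scalars <;> field_simp <;> ring

end LinearODE

theorem two_pi_le_mul_of_two_frequencies {ε T c a b ω₁ ω₂ : ℝ} (hε : 0 < ε) (hc : 0 ≤ c)
    (hsum : ω₁ + ω₂ = ε) (ha : 0 < a) (hb : 0 < b) (hab : a + b = 1)
    (hc2 : c ^ 2 = ω₁ ^ 2 * a + ω₂ ^ 2 * b)
    (h₁ : ω₁ = 0 ∨ 2 * π ≤ |ω₁| * T) (h₂ : ω₂ = 0 ∨ 2 * π ≤ |ω₂| * T) :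
    2 * π ≤ c * T ∨ (c < ε ∧ 2 * π ≤ ε * T) := by
  wlog hle : |ω₁| ≤ |ω₂| generalizing ω₁ ω₂ a b
  · exact this (by linarith) hb ha (by linarith) (by linarith) h₂ h₁ (le_of_not_ge hle)
  rcases h₁ with rfl | h₁
  · obtain rfl : ω₂ = ε := by linarith
    refine Or.inr ⟨?_, h₂.resolve_left hε.ne' |>.trans_eq (by rw [abs_of_pos hε])⟩
    rw [← sq_lt_sq₀ hc hε.le]
    nlinarith [mul_pos (pow_pos hε 2) ha]
  · have hsq : ω₁ ^ 2 ≤ ω₂ ^ 2 := sq_le_sq.mpr hle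
    have hω₁c : |ω₁| ≤ c := by
      rw [← sq_le_sq₀ (abs_nonneg _) hc, sq_abs]
      nlinarith
    have hT : 0 < T := pos_of_mul_pos_right (two_pi_pos.trans_le h₁) (abs_nonneg _)
    exact Or.inl (h₁.trans (mul_le_mul_of_nonneg_right hω₁c hT.le))

theorem eq_zero_of_forall_re_cexp_mul_eq {θ : ℝ} (hθ : θ ≠ 0) {w : ℂ}
    (h : ∀ t : ℝ, (cexp (θ * t * I) * w).re = w.re) : w = 0 := by
  have hθ' : (θ : ℂ) ≠ 0 := ofReal_ne_zero.mpr hθ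
  have hπ := h (π / θ)
  have hπ2 := h (π / 2 / θ)
  rw [show (θ : ℂ) * ↑(π / θ) * I = π * I by push_cast; field_simp, exp_pi_mul_I] at hπ
  rw [show (θ : ℂ) * ↑(π / 2 / θ) * I = ↑(π / 2) * I by push_cast; field_simp, exp_mul_I] at hπ2
  simp only [neg_one_mul, neg_re] at hπ
  simp at hπ2
  apply Complex.ext <;> simp <;> linarith

section InnerProduct

variable {F : Type*} [NormedAddCommGroup F] [InnerProductSpace ℂ F]

theorem inner_eq_zero_of_norm_cexp_smul_add_cexp_smul_eq {ω₁ ω₂ : ℝ} (hω : ω₁ ≠ ω₂) {A B : F}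
    (h : ∀ t : ℝ, ‖cexp (ω₁ * t * I) • A + cexp (ω₂ * t * I) • B‖ = ‖A + B‖) :
    inner ℂ A B = 0 := by
  refine eq_zero_of_forall_re_cexp_mul_eq (sub_ne_zero.mpr hω.symm) fun t => ?_
  have hinner : inner ℂ (cexp (ω₁ * t * I) • A) (cexp (ω₂ * t * I) • B)
      = cexp ((ω₂ - ω₁ : ℝ) * t * I) * inner ℂ A B := by
    rw [inner_smul_left, inner_smul_right, ← exp_conj, ← mul_assoc, ← Complex.exp_add]
    simp only [map_mul, conj_ofReal, conj_I]
    push_cast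
    ring_nf
  have hnorm : ∀ ω : ℝ, ‖cexp (ω * t * I)‖ = 1 := fun ω => by
    simpa using norm_exp_ofReal_mul_I (ω * t)
  have hsq := h t
  rw [← sq_eq_sq₀ (norm_nonneg _) (norm_nonneg _), @norm_add_sq ℂ, @norm_add_sq ℂ, hinner,
    norm_smul, norm_smul, hnorm, hnorm, one_mul, one_mul] at hsq
  simp only [RCLike.re_to_complex] at hsq
  linarith

theorem norm_smul_add_smul_sq_of_inner_eq_zero {A B : F} (h : inner ℂ A B = 0) (z w : ℂ) :
    ‖z • A + w • B‖ ^ 2 = ‖z‖ ^ 2 * ‖A‖ ^ 2 + ‖w‖ ^ 2 * ‖B‖ ^ 2 := by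
  rw [@norm_add_sq ℂ, inner_smul_left, inner_smul_right, h, norm_smul, norm_smul]
  simp only [mul_zero, map_zero, add_zero]
  ring

theorem two_pi_le_mul_of_norm_cexp_smul_add_cexp_smul_eq_one {ε T ω₁ ω₂ : ℝ} (hε : 0 < ε)
    (hsum : ω₁ + ω₂ = ε) (hne : ω₁ ≠ ω₂) {A B : F} (hA : A ≠ 0) (hB : B ≠ 0)
    (hnorm : ∀ t : ℝ, ‖cexp (ω₁ * t * I) • A + cexp (ω₂ * t * I) • B‖ = 1)
    (h₁ : ω₁ = 0 ∨ 2 * π ≤ |ω₁| * T) (h₂ : ω₂ = 0 ∨ 2 * π ≤ |ω₂| * T) :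
    2 * π ≤ ‖(ω₁ * I) • A + (ω₂ * I) • B‖ * T ∨
      (‖(ω₁ * I) • A + (ω₂ * I) • B‖ < ε ∧ 2 * π ≤ ε * T) := by
  have hAB : ‖A + B‖ = 1 := by simpa using hnorm 0
  have horth : inner ℂ A B = 0 :=
    inner_eq_zero_of_norm_cexp_smul_add_cexp_smul_eq hne fun t => (hnorm t).trans hAB.symm
  refine two_pi_le_mul_of_two_frequencies hε (norm_nonneg _) hsum (pow_pos (norm_pos_iff.2 hA) 2)
    (pow_pos (norm_pos_iff.2 hB) 2) ?_ ?_ h₁ h₂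
  · simpa [hAB] using (norm_smul_add_smul_sq_of_inner_eq_zero horth 1 1).symm
  · rw [norm_smul_add_smul_sq_of_inner_eq_zero horth]
    simp

end InnerProduct

theorem hNorm_eq_norm_toLp (x : ℂ × ℂ) : hNorm x = ‖WithLp.toLp 2 x‖ := by
  rw [WithLp.prod_norm_eq_of_L2, hNorm]
  simp [normSq_eq_norm_sq]

theorem period_bounds_of_two_pi_le {ε c T : ℝ} (hε : 0 < ε) (hT : 0 < T)
    (h : 2 * π ≤ c * T ∨ (c < ε ∧ 2 * π ≤ ε * T)) :
    (ε ≤ c → T ≥ 2 * π / c) ∧ (c ≤ ε → T ≥ 2 * π / ε) := by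
  rcases h with h | ⟨hcε, h⟩
  · have hc : 0 < c := pos_of_mul_pos_left (two_pi_pos.trans_le h) hT.le
    exact ⟨fun _ => (div_le_iff₀ hc).2 (by linarith),
      fun hcε => (div_le_iff₀ hε).2 (by nlinarith)⟩
  · exact ⟨fun h' => absurd h' (not_le.2 hcε), fun _ => (div_le_iff₀ hε).2 (by linarith)⟩

theorem stmt_9_general (ε : ℝ) (hε : 0 < ε) (γ : ℝ → ℂ × ℂ)
    (hdiff : Differentiable ℝ γ) (hdiff2 : Differentiable ℝ (deriv γ))
    (hnonconst : ∃ s t : ℝ, γ s ≠ γ t)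
    (hsphere : ∀ t : ℝ, hNorm (γ t) = 1)
    (c δ : ℝ) (hc : c = hNorm (deriv γ 0))
    (hode : ∀ t : ℝ, deriv (deriv γ) t - ε • (Complex.I • deriv γ t)
      + (c ^ 2 - ε * δ) • γ t = 0)
    (T : ℝ) (hT : 0 < T) (hper : ∀ t : ℝ, γ (t + T) = γ t) :
    (ε ≤ c → T ≥ 2 * Real.pi / c) ∧ (c ≤ ε → T ≥ 2 * Real.pi / ε) := by
  refine period_bounds_of_two_pi_le hε hT ?_
  obtain ⟨l₁, l₂, hsum, hprod⟩ := exists_add_eq_and_mul_eq ((ε : ℂ) * I) ((c ^ 2 - ε * δ : ℝ) : ℂ)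
  have hode' : ∀ t, deriv (deriv γ) t = (l₁ + l₂) • deriv γ t - (l₁ * l₂) • γ t := fun t => by
    have h := hode t
    rw [← Complex.coe_smul, ← Complex.coe_smul] at h
    rw [hsum, hprod, mul_smul]
    linear_combination (norm := module) h
  rcases deriv_eq_smul_or_eq_cexp_smul_add_cexp_smul hdiff hdiff2 hode' hT.ne' hper with
    ⟨l, hl⟩ | ⟨hne, h₁, h₂, A, B, hA, hB, hrep, hderiv⟩
  · have hcl : c = ‖l‖ := by
      rw [hc, hl 0, hNorm_eq_norm_toLp, WithLp.toLp_smul, norm_smul, ← hNorm_eq_norm_toLp,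
        hsphere, mul_one]
    exact Or.inl (hcl ▸ two_pi_le_norm_mul_of_deriv_eq_smul hT hdiff hl hper hnonconst)
  obtain ⟨ω₁, rfl, hω₁⟩ := exists_eq_ofReal_mul_I_of_cexp_mul_eq_one hT h₁
  obtain ⟨ω₂, rfl, hω₂⟩ := exists_eq_ofReal_mul_I_of_cexp_mul_eq_one hT h₂
  have hnorm : ∀ t : ℝ,
      ‖cexp (ω₁ * t * I) • WithLp.toLp 2 A + cexp (ω₂ * t * I) • WithLp.toLp 2 B‖ = 1 :=
    fun t => by
      rw [← hsphere t, hrep t, hNorm_eq_norm_toLp, WithLp.toLp_add, WithLp.toLp_smul,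
        WithLp.toLp_smul, mul_right_comm (ω₁ : ℂ), mul_right_comm (ω₂ : ℂ)]
  have hc' : c = ‖(ω₁ * I) • WithLp.toLp 2 A + (ω₂ * I) • WithLp.toLp 2 B‖ := by
    rw [hc, hderiv, hNorm_eq_norm_toLp, WithLp.toLp_add, WithLp.toLp_smul, WithLp.toLp_smul]
  exact hc' ▸ two_pi_le_mul_of_norm_cexp_smul_add_cexp_smul_eq_one hε
    (by simpa using congrArg im hsum) (fun h => hne (by rw [h])) (by simpa using hA)
    (by simpa using hB) hnorm hω₁ hω₂

theorem stmt_9 (ε : ℝ) (hε : 0 < ε) (γ : ℝ → ℂ × ℂ)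
    (hdiff : Differentiable ℝ γ) (hdiff2 : Differentiable ℝ (deriv γ))
    (hnonconst : ∃ s t : ℝ, γ s ≠ γ t)
    (hsphere : ∀ t : ℝ, hNorm (γ t) = 1)
    (c δ : ℝ) (hc : c = hNorm (deriv γ 0))
    (hδ : δ = ((starRingEnd ℂ) (γ 0).1 * (deriv γ 0).1
      + (starRingEnd ℂ) (γ 0).2 * (deriv γ 0).2).im)
    (hode : ∀ t : ℝ, deriv (deriv γ) t - ε • (Complex.I • deriv γ t)
      + (c ^ 2 - ε * δ) • γ t = 0)
    (T : ℝ) (hT : 0 < T) (hper : ∀ t : ℝ, γ (t + T) = γ t) :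
    (ε ≤ c → T ≥ 2 * Real.pi / c) ∧ (c ≤ ε → T ≥ 2 * Real.pi / ε) :=
  stmt_9_general ε hε γ hdiff hdiff2 hnonconst hsphere c δ hc hode T hT hper
end
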